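/- arXiv:2107.00145 — 3 statements merged into one kernel-verified Lean document; each statement's English description precedes it below -/
import Mathlib

section
/- Let A be an integer matrix whose columns are configuration vectors, i.e., each column c = (c_1,...,c_k) is a nonnegative integer vector with Σ_{i=1}^k i·c_i = k, except possibly one distinguished column ĉ with Σ_{i=1}^k i·ĉ_i = 2k. Then for any square submatrix B of A, |det(B)| ≤ e^k. -/
/-!
Scale row `i` of the submatrix `B` (rows `r`, columns `c`) by `i + 1`. The scaled matrix is
nonnegative, its column sums are bounded by the weighted sums `∑ i, (i + 1) A i j`, hence by `k`,
except for at most one column bounded by `2k`; so its determinant is at most `2 k^s` in absolute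
value. The row weights are distinct positive integers, so their product is at least `s!`, which
gives `|det B| ≤ 2 k^s / s! ≤ e^k`.
-/

open Finset Nat

section OrderedRing

variable {R : Type*} [CommRing R] [LinearOrder R] [IsStrictOrderedRing R]

theorem Matrix.abs_det_le_prod_sum_of_nonneg {n : Type*} [Fintype n] [DecidableEq n]
    (M : Matrix n n R) (hM : ∀ i j, 0 ≤ M i j) : |M.det| ≤ ∏ j, ∑ i, M i j := by
  have hprod_nonneg (f : n → n) : 0 ≤ ∏ j, M (f j) j := prod_nonneg fun j _ => hM _ _
  calc |M.det| = |∑ σ : Equiv.Perm n, Equiv.Perm.sign σ • ∏ j, M (σ j) j| := by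
        rw [Matrix.det_apply]
    _ ≤ ∑ σ : Equiv.Perm n, |Equiv.Perm.sign σ • ∏ j, M (σ j) j| := abs_sum_le_sum_abs _ _
    _ = ∑ σ : Equiv.Perm n, ∏ j, M (σ j) j := by
        refine sum_congr rfl fun σ _ => ?_
        rw [Units.smul_def, zsmul_eq_mul, abs_mul, abs_unit_intCast, one_mul,
          abs_of_nonneg (hprod_nonneg σ)]
    _ = ∑ f ∈ univ.image (fun σ : Equiv.Perm n => (σ : n → n)), ∏ j, M (f j) j := by
        rw [sum_image DFunLike.coe_injective.injOn]
    _ ≤ ∑ f : n → n, ∏ j, M (f j) j :=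
        sum_le_sum_of_subset_of_nonneg (subset_univ _) fun f _ _ => hprod_nonneg f
    _ = ∏ j, ∑ i, M i j := by
        rw [prod_univ_sum, Fintype.piFinset_univ]

theorem Fintype.prod_le_mul_pow_of_forall_ne {ι : Type*} [Fintype ι] [DecidableEq ι]
    {f : ι → R} {a b : R} (i₀ : ι) (hf : ∀ i, 0 ≤ f i) (h₀ : f i₀ ≤ a * b)
    (h : ∀ i ≠ i₀, f i ≤ b) : ∏ i, f i ≤ a * b ^ Fintype.card ι := by
  have hrest : ∏ i ∈ univ.erase i₀, f i ≤ b ^ (Fintype.card ι - 1) := by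
    rw [← Finset.card_univ, ← card_erase_of_mem (mem_univ i₀), ← prod_const]
    exact prod_le_prod (fun i _ => hf i) fun i hi => h i (ne_of_mem_erase hi)
  obtain ⟨m, hm⟩ := Nat.exists_eq_add_one.mpr (Fintype.card_pos_iff.mpr ⟨i₀⟩)
  calc ∏ i, f i = f i₀ * ∏ i ∈ univ.erase i₀, f i := (mul_prod_erase _ _ (mem_univ i₀)).symm
    _ ≤ a * b * b ^ (Fintype.card ι - 1) :=
        mul_le_mul h₀ hrest (prod_nonneg fun i _ => hf i) ((hf i₀).trans h₀)
    _ = a * b ^ Fintype.card ι := by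
        rw [hm, Nat.add_sub_cancel]
        ring

end OrderedRing

theorem Fintype.sum_comp_le_sum_of_injective {ι κ M : Type*} [Fintype ι] [Fintype κ]
    [AddCommMonoid M] [PartialOrder M] [IsOrderedAddMonoid M]
    {e : ι → κ} (he : Function.Injective e) {f : κ → M} (hf : ∀ i, 0 ≤ f i) :
    ∑ i, f (e i) ≤ ∑ j, f j := by
  classical
  rw [← sum_image fun _ _ _ _ h => he h]
  exact sum_le_sum_of_subset_of_nonneg (subset_univ _) fun j _ _ => hf j

theorem Function.Injective.exists_forall_ne_ne {α β : Type*} [Nonempty α] {f : α → β}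
    (hf : Function.Injective f) (b : β) : ∃ a₀, ∀ a ≠ a₀, f a ≠ b := by
  by_cases h : ∃ a, f a = b
  · obtain ⟨a₀, rfl⟩ := h
    exact ⟨a₀, fun a ha => hf.ne ha⟩
  · push Not at h
    exact ⟨Classical.arbitrary α, fun a _ => h a⟩

theorem Nat.factorial_card_le_prod_succ (S : Finset ℕ) : S.card ! ≤ ∏ v ∈ S, (v + 1) := by
  induction S using Finset.induction_on_max with
  | empty => simp
  | insert a S hlt ih =>
    have ha : a ∉ S := fun h => lt_irrefl a (hlt a h)
    have hcard : S.card ≤ a := by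
      simpa using card_le_card fun x hx => mem_range.mpr (hlt x hx)
    rw [card_insert_of_notMem ha, prod_insert ha, Nat.factorial_succ]
    exact Nat.mul_le_mul (by omega) ih

theorem Nat.factorial_card_le_prod_succ_of_injective {ι : Type*} [Fintype ι] {f : ι → ℕ}
    (hf : Function.Injective f) : (Fintype.card ι) ! ≤ ∏ i, (f i + 1) := by
  classical
  have h := Nat.factorial_card_le_prod_succ (univ.image f)
  rwa [Finset.card_image_of_injective univ hf, prod_image hf.injOn] at h

theorem Real.pow_succ_div_factorial_succ (x : ℝ) (m : ℕ) :
    x ^ (m + 1) / (m + 1)! = x ^ m / m ! * (x / (m + 1)) := by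
  rw [Nat.factorial_succ]
  push_cast
  field_simp
  ring

theorem Real.two_mul_pow_div_factorial_le_exp (k : ℕ) {s : ℕ} (hs : s ≠ 0) :
    2 * (k : ℝ) ^ s / s ! ≤ Real.exp k := by
  -- `2 k^s / s!` is at most the sum of `k^s / s!` and whichever neighbouring term of the
  -- exponential series dominates it: the one at `s - 1` if `k ≤ s`, at `s + 1` otherwise.
  obtain ⟨j, hjs, hj, hterm⟩ :
      ∃ j, j ≠ s ∧ j < s + 2 ∧ (k : ℝ) ^ s / s ! ≤ (k : ℝ) ^ j / j ! := by
    rcases le_or_gt k s with hks | hks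
    · obtain ⟨m, rfl⟩ := Nat.exists_eq_succ_of_ne_zero hs
      refine ⟨m, by omega, by omega, ?_⟩
      rw [Real.pow_succ_div_factorial_succ]
      refine mul_le_of_le_one_right (by positivity) (div_le_one_of_le₀ ?_ (by positivity))
      exact_mod_cast hks
    · refine ⟨s + 1, by omega, by omega, ?_⟩
      rw [Real.pow_succ_div_factorial_succ]
      refine le_mul_of_one_le_right (by positivity) ((one_le_div (by positivity)).mpr ?_)
      exact_mod_cast hks
  have hpair : ({j, s} : Finset ℕ) ⊆ range (s + 2) := by
    intro i hi
    rw [mem_insert, mem_singleton] at hi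
    rw [mem_range]
    omega
  calc 2 * (k : ℝ) ^ s / s ! ≤ ∑ i ∈ {j, s}, (k : ℝ) ^ i / i ! := by
        rw [sum_pair hjs, mul_div_assoc]
        linarith
    _ ≤ ∑ i ∈ range (s + 2), (k : ℝ) ^ i / i ! :=
        sum_le_sum_of_subset_of_nonneg hpair fun i _ _ => by positivity
    _ ≤ Real.exp k := Real.sum_le_exp_of_nonneg k.cast_nonneg _

theorem Matrix.factorial_mul_abs_det_submatrix_le {k N s : ℕ} (A : Matrix (Fin k) (Fin N) ℤ)
    (hA : ∀ i j, 0 ≤ A i j) (j₀ : Fin N)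
    (hcol : ∀ j ≠ j₀, ∑ i : Fin k, ((i : ℤ) + 1) * A i j ≤ k)
    (hcol₀ : ∑ i : Fin k, ((i : ℤ) + 1) * A i j₀ ≤ 2 * k)
    {r : Fin s → Fin k} {c : Fin s → Fin N} (hr : Function.Injective r)
    (hc : Function.Injective c) :
    (s ! : ℤ) * |(A.submatrix r c).det| ≤ 2 * (k : ℤ) ^ s := by
  rcases Nat.eq_zero_or_pos s with rfl | hs
  · simp
  have : Nonempty (Fin s) := ⟨⟨0, hs⟩⟩
  set B := A.submatrix r c
  set W : Matrix (Fin s) (Fin s) ℤ := Matrix.of fun t u => ((r t : ℤ) + 1) * B t u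
  have hW_nonneg : ∀ t u, 0 ≤ W t u := fun t u => mul_nonneg (by positivity) (hA _ _)
  have hW_col (u : Fin s) : ∑ t, W t u ≤ ∑ i : Fin k, ((i : ℤ) + 1) * A i (c u) :=
    Fintype.sum_comp_le_sum_of_injective hr fun i => mul_nonneg (by positivity) (hA _ _)
  have hcol_le_two_mul (j : Fin N) : ∑ i : Fin k, ((i : ℤ) + 1) * A i j ≤ 2 * k := by
    by_cases hj : j = j₀
    · exact hj ▸ hcol₀
    · linarith [hcol j hj]
  obtain ⟨u₀, hu₀⟩ := hc.exists_forall_ne_ne j₀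
  have hW_prod : ∏ u, ∑ t, W t u ≤ 2 * (k : ℤ) ^ s := by
    simpa using Fintype.prod_le_mul_pow_of_forall_ne u₀
      (fun u => sum_nonneg fun t _ => hW_nonneg t u) ((hW_col u₀).trans (hcol_le_two_mul _))
      fun u hu => (hW_col u).trans (hcol _ (hu₀ u hu))
  have hfact : (s ! : ℤ) ≤ ∏ t, ((r t : ℤ) + 1) := by
    have h := Nat.factorial_card_le_prod_succ_of_injective (Fin.val_injective.comp hr)
    rw [Fintype.card_fin] at h
    exact_mod_cast h
  calc (s ! : ℤ) * |B.det| ≤ (∏ t, ((r t : ℤ) + 1)) * |B.det| :=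
        mul_le_mul_of_nonneg_right hfact (abs_nonneg _)
    _ = |W.det| := by
        rw [Matrix.det_mul_column, abs_mul,
          abs_of_pos (prod_pos fun t _ => by positivity : 0 < ∏ t, ((r t : ℤ) + 1))]
    _ ≤ ∏ u, ∑ t, W t u := W.abs_det_le_prod_sum_of_nonneg hW_nonneg
    _ ≤ 2 * (k : ℤ) ^ s := hW_prod

/-- Any square submatrix of a matrix whose columns are configuration vectors
(nonnegative, with `∑ i·c_i = k`, except possibly one distinguished column with
`∑ i·c_i = 2k`) has determinant at most `e^k` in absolute value. -/
theorem stmt_2 (k N : ℕ) (A : Matrix (Fin k) (Fin N) ℤ) (chat : Fin N)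
    (hpos : ∀ j i, 0 ≤ A i j)
    (hcol : ∀ j, j ≠ chat → ∑ i : Fin k, ((i : ℤ) + 1) * A i j = k)
    (hchat : ∑ i : Fin k, ((i : ℤ) + 1) * A i chat = k ∨
          ∑ i : Fin k, ((i : ℤ) + 1) * A i chat = 2 * k)
    (s : ℕ) (r : Fin s → Fin k) (c : Fin s → Fin N)
    (hr : Function.Injective r) (hc : Function.Injective c) :
    |(((A.submatrix r c).det : ℤ) : ℝ)| ≤ Real.exp (k : ℝ) := by
  rcases Nat.eq_zero_or_pos s with rfl | hs
  · simp
  have key := A.factorial_mul_abs_det_submatrix_le (fun i j => hpos j i) chat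
    (fun j hj => (hcol j hj).le) (by omega) hr hc
  calc |(((A.submatrix r c).det : ℤ) : ℝ)| ≤ 2 * (k : ℝ) ^ s / s ! := by
        rw [le_div_iff₀ (by positivity), mul_comm]
        exact_mod_cast key
    _ ≤ Real.exp k := Real.two_mul_pow_div_factorial_le_exp k hs.ne'
end

section
/- Let A be an integer matrix and define the lattice L*(A) = {h ∈ ℤ^n : A·h = 0, h ≠ 0}. Every h ∈ L*(A) can be written as a finite sum h = Σ_i g^i where each g^i is a ⊑-minimal element of L*(A) (a Graver basis element) and each g^i is sign-compatible with h (i.e., g^i_j · h_j ≥ 0 for every coordinate j). -/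
/-- `a` is sign-compatible with `b`. -/
def SignCompat {n : ℕ} (a b : Fin n → ℤ) : Prop := ∀ i, 0 ≤ a i * b i

/-- `a ⊑ b`: sign-compatible and coordinatewise no larger in absolute value. -/
def Conforms {n : ℕ} (a b : Fin n → ℤ) : Prop :=
  SignCompat a b ∧ ∀ i, |a i| ≤ |b i|

/-- `g` is an element of the Graver basis of `A`: a `⊑`-minimal nonzero
element of the lattice `{h : A h = 0, h ≠ 0}`. -/
def InGraver {m n : ℕ} (A : Matrix (Fin m) (Fin n) ℤ) (g : Fin n → ℤ) : Prop :=
  g ≠ 0 ∧ A.mulVec g = 0 ∧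
    ∀ h : Fin n → ℤ, h ≠ 0 → A.mulVec h = 0 → Conforms h g → h = g

lemma conf_refl {n : ℕ} (a : Fin n → ℤ) : Conforms a a :=
  ⟨fun i => mul_self_nonneg _, fun i => le_refl _⟩

lemma conf_trans {n : ℕ} {a b c : Fin n → ℤ} (hab : Conforms a b) (hbc : Conforms b c) :
    Conforms a c := by
  constructor
  · intro i
    have h1 := hab.1 i
    have h2 := hbc.1 i
    have h3 := hab.2 i
    rcases eq_or_ne (b i) 0 with hb | hb
    · have ha : a i = 0 := by
        have : |a i| ≤ 0 := by simpa [hb] using h3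
        exact abs_eq_zero.mp (le_antisymm this (abs_nonneg _))
      simp [ha]
    · nlinarith [mul_nonneg h1 h2, sq_nonneg (b i), sq_abs (b i), abs_pos.mpr hb,
        mul_pos (abs_pos.mpr hb) (abs_pos.mpr hb)]
  · intro i; exact le_trans (hab.2 i) (hbc.2 i)

lemma sub_conf {n : ℕ} {g h : Fin n → ℤ} (hc : Conforms g h) :
    Conforms (h - g) h ∧ ∀ i, |(h - g) i| + |g i| ≤ |h i| := by
  have key : ∀ i, 0 ≤ (h i - g i) * h i ∧ |h i - g i| + |g i| ≤ |h i| := by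
    intro i
    have h1 := hc.1 i
    have h2 := hc.2 i
    rcases abs_cases (g i) with ⟨e1, s1⟩ | ⟨e1, s1⟩ <;>
      rcases abs_cases (h i) with ⟨e2, s2⟩ | ⟨e2, s2⟩ <;>
      rcases abs_cases (h i - g i) with ⟨e3, s3⟩ | ⟨e3, s3⟩ <;>
      constructor <;> nlinarith
  refine ⟨⟨fun i => ?_, fun i => ?_⟩, fun i => ?_⟩
  · simpa using (key i).1
  · have := (key i).2; have := abs_nonneg (g i); simp only [Pi.sub_apply]; linarith
  · simpa using (key i).2

lemma eq_of_conf_natAbs {n : ℕ} {a b : Fin n → ℤ} (hc : Conforms a b)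
    (hn : ∀ i, (a i).natAbs = (b i).natAbs) : a = b := by
  funext i
  have h1 := hc.1 i
  have h2 := hn i
  rcases Int.natAbs_eq_natAbs_iff.mp h2 with h | h
  · exact h
  · have : 0 ≤ -(b i) * b i := h ▸ h1
    have hb : b i = 0 := by nlinarith [sq_nonneg (b i)]
    simp [hb] at h ⊢; omega

lemma natAbs_conf_le {n : ℕ} {a b : Fin n → ℤ} (hc : Conforms a b) (i : Fin n) :
    (a i).natAbs ≤ (b i).natAbs := by
  have := hc.2 i
  simp only [Int.abs_eq_natAbs] at this
  exact_mod_cast this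

lemma key {m n : ℕ} (A : Matrix (Fin m) (Fin n) ℤ) :
    ∀ N : ℕ, ∀ h : Fin n → ℤ, (∑ j, (h j).natAbs) ≤ N → h ≠ 0 → A.mulVec h = 0 →
    ∃ (t : ℕ) (g : Fin t → (Fin n → ℤ)),
      h = ∑ i : Fin t, g i ∧ ∀ i, InGraver A (g i) ∧ Conforms (g i) h := by
  intro N
  induction N using Nat.strong_induction_on with
  | _ N ih =>
  intro h hN hh0 hker
  -- the set of candidates
  set P : (Fin n → ℤ) → Prop := fun x => x ≠ 0 ∧ A.mulVec x = 0 ∧ Conforms x h with hP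
  have hPh : P h := ⟨hh0, hker, conf_refl h⟩
  have hKne : {k : ℕ | ∃ x, P x ∧ (∑ j, (x j).natAbs) = k}.Nonempty :=
    ⟨_, h, hPh, rfl⟩
  obtain ⟨g, hgP, hgn⟩ := Nat.sInf_mem hKne
  have hmin : ∀ x, P x → sInf {k : ℕ | ∃ x, P x ∧ (∑ j, (x j).natAbs) = k} ≤ ∑ j, (x j).natAbs :=
    fun x hx => Nat.sInf_le ⟨x, hx, rfl⟩
  -- g is a Graver element
  have hgrav : InGraver A g := by
    refine ⟨hgP.1, hgP.2.1, ?_⟩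
    intro h' h'0 h'ker h'c
    have hPh' : P h' := ⟨h'0, h'ker, conf_trans h'c hgP.2.2⟩
    have hle : ∑ j, (g j).natAbs ≤ ∑ j, (h' j).natAbs := hgn ▸ hmin h' hPh'
    have hge : ∀ j ∈ Finset.univ, (h' j).natAbs ≤ (g j).natAbs :=
      fun j _ => natAbs_conf_le h'c j
    have hsum : ∑ j, (h' j).natAbs = ∑ j, (g j).natAbs :=
      le_antisymm (Finset.sum_le_sum hge) hle
    have heq := (Finset.sum_eq_sum_iff_of_le hge).mp hsum
    exact eq_of_conf_natAbs h'c (fun j => heq j (Finset.mem_univ j))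
  rcases eq_or_ne (h - g) 0 with hhg | hhg
  · -- h = g
    have : h = g := by rwa [sub_eq_zero] at hhg
    exact ⟨1, fun _ => g, by simp [this], fun _ => ⟨hgrav, this ▸ hgP.2.2⟩⟩
  · -- recurse on h - g
    obtain ⟨hconf, habs⟩ := sub_conf hgP.2.2
    have hkerhg : A.mulVec (h - g) = 0 := by
      rw [Matrix.mulVec_sub, hker, hgP.2.1, sub_zero]
    -- strict norm decrease
    have hgpos : 0 < ∑ j, (g j).natAbs := by
      rcases Function.ne_iff.mp hgP.1 with ⟨j, hj⟩
      exact Finset.sum_pos' (fun _ _ => Nat.zero_le _)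
        ⟨j, Finset.mem_univ j, Int.natAbs_pos.mpr hj⟩
    have hdec : (∑ j, ((h - g) j).natAbs) + (∑ j, (g j).natAbs) ≤ ∑ j, (h j).natAbs := by
      rw [← Finset.sum_add_distrib]
      refine Finset.sum_le_sum fun j _ => ?_
      have := habs j
      simp only [Int.abs_eq_natAbs] at this
      exact_mod_cast this
    have hlt : (∑ j, ((h - g) j).natAbs) < N :=
      lt_of_lt_of_le (lt_of_lt_of_le (Nat.lt_add_of_pos_right hgpos) hdec) hN
    obtain ⟨t, g', hsum', hprop'⟩ := ih _ hlt (h - g) le_rfl hhg hkerhg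
    refine ⟨t + 1, Fin.cons g g', ?_, ?_⟩
    · rw [Fin.sum_cons, ← hsum']; abel
    · intro i
      refine Fin.cases ?_ ?_ i
      · exact ⟨hgrav, hgP.2.2⟩
      · intro j
        simp only [Fin.cons_succ]
        exact ⟨(hprop' j).1, conf_trans (hprop' j).2 hconf⟩

/-- Graver decomposition: every nonzero integer vector in the kernel of `A` is a
sign-compatible sum of Graver basis elements (with possible repetitions). -/
theorem stmt_6 (m n : ℕ) (A : Matrix (Fin m) (Fin n) ℤ)
    (h : Fin n → ℤ) (hh0 : h ≠ 0) (hker : A.mulVec h = 0) :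
    ∃ (t : ℕ) (g : Fin t → (Fin n → ℤ)),
      h = ∑ i : Fin t, g i ∧
      ∀ i, InGraver A (g i) ∧ SignCompat (g i) h := by
  obtain ⟨t, g, hsum, hprop⟩ := key A (∑ j, (h j).natAbs) h le_rfl hh0 hker
  exact ⟨t, g, hsum, fun i => ⟨(hprop i).1, (hprop i).2.1⟩⟩
end

section
/- Let A be an integer matrix, let x, y ∈ ℤ^N with x, y ≥ 0, A·x = A·y, and suppose there is a distinguished coordinate ĉ with x_ĉ = 1 and y_ĉ = 0. Then there exists y' ∈ ℤ^N with y' ≥ 0, A·y' = A·x, y'_ĉ = 0, and x − y' an element of the Graver basis of A. -/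
/-!
Set `z = x - y`, a kernel vector with `z ĉ = 1`. Among the kernel vectors `g ⊑ z` with `g ĉ = 1`
take one of minimal ℓ¹-norm. It lies in the Graver basis: a nonzero kernel vector `h ⊏ g` has
`h ĉ ∈ {0, 1}`, and then `h` (if `h ĉ = 1`) or `g - h` (if `h ĉ = 0`) would be a smaller candidate,
because `‖g‖₁ = ‖h‖₁ + ‖g - h‖₁` whenever `h ⊑ g`. Finally `y' = x - g` is nonnegative since
`g ⊑ x - y` with `x, y ≥ 0`.
-/

section Conformal

variable {n : ℕ}

lemma conforms_iff {a b : Fin n → ℤ} :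
    Conforms a b ↔ ∀ i, 0 ≤ a i ∧ a i ≤ b i ∨ b i ≤ a i ∧ a i ≤ 0 := by
  simp only [Conforms, SignCompat, ← forall_and]
  refine forall_congr' fun i => ?_
  rw [mul_nonneg_iff, Int.abs_eq_natAbs, Int.abs_eq_natAbs]
  omega

lemma Conforms.refl (a : Fin n → ℤ) : Conforms a a :=
  conforms_iff.2 fun i => by omega

lemma Conforms.trans {a b c : Fin n → ℤ} (hab : Conforms a b) (hbc : Conforms b c) :
    Conforms a c :=
  conforms_iff.2 fun i => by
    have := conforms_iff.1 hab i
    have := conforms_iff.1 hbc i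
    omega

lemma Conforms.sub_conforms {a b : Fin n → ℤ} (h : Conforms a b) : Conforms (b - a) b :=
  conforms_iff.2 fun i => by
    have := conforms_iff.1 h i
    simp only [Pi.sub_apply]
    omega

lemma Conforms.apply_eq_zero_or_eq_one {a b : Fin n → ℤ} (h : Conforms a b) {i : Fin n}
    (hb : b i = 1) : a i = 0 ∨ a i = 1 := by
  have := conforms_iff.1 h i
  omega

lemma Conforms.sub_nonneg_of_nonneg {g x y : Fin n → ℤ} (h : Conforms g (x - y))
    (hx : ∀ j, 0 ≤ x j) (hy : ∀ j, 0 ≤ y j) (j : Fin n) : 0 ≤ x j - g j := by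
  have hgj := conforms_iff.1 h j
  simp only [Pi.sub_apply] at hgj
  have := hx j
  have := hy j
  omega

def l1Norm (a : Fin n → ℤ) : ℕ := ∑ i, (a i).natAbs

lemma l1Norm_pos {a : Fin n → ℤ} (ha : a ≠ 0) : 0 < l1Norm a := by
  obtain ⟨i, hi⟩ := Function.ne_iff.1 ha
  exact Finset.sum_pos' (fun _ _ => Nat.zero_le _)
    ⟨i, Finset.mem_univ i, Int.natAbs_pos.2 hi⟩

lemma Conforms.l1Norm_add_l1Norm_sub {a b : Fin n → ℤ} (h : Conforms a b) :
    l1Norm a + l1Norm (b - a) = l1Norm b := by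
  rw [l1Norm, l1Norm, l1Norm, ← Finset.sum_add_distrib]
  refine Finset.sum_congr rfl fun i _ => ?_
  have := conforms_iff.1 h i
  simp only [Pi.sub_apply]
  omega

end Conformal

lemma exists_inGraver_conforms {m n : ℕ} {A : Matrix (Fin m) (Fin n) ℤ} {z : Fin n → ℤ}
    (hz : A.mulVec z = 0) {c : Fin n} (hzc : z c = 1) :
    ∃ g, InGraver A g ∧ Conforms g z ∧ g c = 1 := by
  let S := {g : Fin n → ℤ | A.mulVec g = 0 ∧ Conforms g z ∧ g c = 1}
  obtain ⟨g, ⟨hgA, hgz, hgc⟩, hmin⟩ :=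
    (measure l1Norm).wf.has_min S ⟨z, hz, Conforms.refl z, hzc⟩
  refine ⟨g, ⟨fun h0 => by simp [h0] at hgc, hgA, fun h hh0 hhA hhg => ?_⟩, hgz, hgc⟩
  by_contra hne
  have hsplit := hhg.l1Norm_add_l1Norm_sub
  rcases hhg.apply_eq_zero_or_eq_one hgc with hhc | hhc
  · refine hmin (g - h) ⟨?_, hhg.sub_conforms.trans hgz, by simp [hgc, hhc]⟩ ?_
    · rw [Matrix.mulVec_sub, hgA, hhA, sub_zero]
    · have := l1Norm_pos hh0
      change l1Norm (g - h) < l1Norm g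
      omega
  · refine hmin h ⟨hhA, hhg.trans hgz, hhc⟩ ?_
    have := l1Norm_pos (sub_ne_zero.2 (Ne.symm hne))
    change l1Norm h < l1Norm g
    omega

theorem stmt_8 (m N : ℕ) (A : Matrix (Fin m) (Fin N) ℤ)
    (x y : Fin N → ℤ) (hx : ∀ j, 0 ≤ x j) (hy : ∀ j, 0 ≤ y j)
    (hker : A.mulVec x = A.mulVec y)
    (chat : Fin N) (hxchat : x chat = 1) (hychat : y chat = 0) :
    ∃ y' : Fin N → ℤ, (∀ j, 0 ≤ y' j) ∧ A.mulVec y' = A.mulVec x ∧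
      y' chat = 0 ∧ InGraver A (x - y') := by
  obtain ⟨g, hg, hgz, hgc⟩ := exists_inGraver_conforms (z := x - y)
    (by rw [Matrix.mulVec_sub, hker, sub_self]) (c := chat) (by simp [hxchat, hychat])
  refine ⟨x - g, hgz.sub_nonneg_of_nonneg hx hy, ?_, by simp [hxchat, hgc], ?_⟩
  · rw [Matrix.mulVec_sub, hg.2.1, sub_zero]
  · rwa [sub_sub_cancel]
end
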